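/- arXiv:1507.05952 — 5 statements merged into one kernel-verified Lean document; each statement's English description precedes it below -/
import Mathlib

section
/- Let p, q be probability distributions on [n] with ε ∈ (0,1] and A = {i : q_i ≥ ε/(50n)}. If d_TV(p,q) ≥ ε, then ∑_{i∈A} (p_i - q_i)²/q_i ≥ ε²/5. -/
/-!
Points outside `A` carry `q`-mass at most `n · ε/(50n) = ε/50`, and since `p` and `q` have the
same total mass, they contribute at most `∑_A |p - q| + 2 q(Aᶜ)` to `∑ |p - q|`. Hence
`∑_A |p - q| ≥ 49ε/50`, and the Cauchy–Schwarz (Sedrakyan) inequality with `q(A) ≤ 1` gives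
`∑_A (p - q)²/q ≥ (49ε/50)² ≥ ε²/5`.
-/

open Finset

lemma sq_sum_abs_le_sum_sq_div {ι : Type*} {s : Finset ι} (f : ι → ℝ) {g : ι → ℝ}
    (hg : ∀ i ∈ s, 0 < g i) (hgs : ∑ i ∈ s, g i ≤ 1) :
    (∑ i ∈ s, |f i|) ^ 2 ≤ ∑ i ∈ s, f i ^ 2 / g i := by
  rcases s.eq_empty_or_nonempty with rfl | hs
  · simp
  calc (∑ i ∈ s, |f i|) ^ 2
      ≤ (∑ i ∈ s, |f i|) ^ 2 / ∑ i ∈ s, g i :=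
        le_div_self (sq_nonneg _) (sum_pos hg hs) hgs
    _ ≤ ∑ i ∈ s, f i ^ 2 / g i := by
        simpa only [sq_abs] using sq_sum_div_le_sum_sq_div s (fun i => |f i|) hg

variable {ι : Type*} [Fintype ι] [DecidableEq ι]

lemma sum_compl_filter_le_card_mul (q : ι → ℝ) {c : ℝ} (hc : 0 ≤ c) :
    ∑ i ∈ (univ.filter fun i => c ≤ q i)ᶜ, q i ≤ Fintype.card ι * c := by
  calc ∑ i ∈ (univ.filter fun i => c ≤ q i)ᶜ, q i
      ≤ ∑ _i ∈ (univ.filter fun i => c ≤ q i)ᶜ, c :=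
        sum_le_sum fun i hi => by
          simp only [mem_compl, mem_filter, mem_univ, true_and, not_le] at hi; exact hi.le
    _ = #(univ.filter fun i => c ≤ q i)ᶜ * c := by rw [sum_const, nsmul_eq_mul]
    _ ≤ Fintype.card ι * c := by gcongr; exact_mod_cast card_le_univ _

lemma sum_abs_sub_le_of_sum_eq {p q : ι → ℝ} (hp0 : ∀ i, 0 ≤ p i) (hq0 : ∀ i, 0 ≤ q i)
    (hpq : ∑ i, p i = ∑ i, q i) (s : Finset ι) :
    ∑ i, |p i - q i| ≤ 2 * ∑ i ∈ s, |p i - q i| + 2 * ∑ i ∈ sᶜ, q i := by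
  have hpointwise : ∀ i, |p i - q i| ≤ (p i - q i) + 2 * q i := fun i => by
    rcases abs_cases (p i - q i) with ⟨h, _⟩ | ⟨h, _⟩ <;> linarith [hp0 i, hq0 i]
  have hcancel : ∑ i ∈ sᶜ, (p i - q i) = -∑ i ∈ s, (p i - q i) := by
    have htotal : ∑ i, (p i - q i) = 0 := by rw [sum_sub_distrib, hpq, sub_self]
    rw [← sum_add_sum_compl s] at htotal
    linarith
  have hcompl : ∑ i ∈ sᶜ, |p i - q i| ≤ ∑ i ∈ s, |p i - q i| + 2 * ∑ i ∈ sᶜ, q i :=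
    calc ∑ i ∈ sᶜ, |p i - q i|
        ≤ ∑ i ∈ sᶜ, (p i - q i) + 2 * ∑ i ∈ sᶜ, q i := by
          rw [mul_sum, ← sum_add_distrib]; exact sum_le_sum fun i _ => hpointwise i
      _ ≤ ∑ i ∈ s, |p i - q i| + 2 * ∑ i ∈ sᶜ, q i := by
          rw [hcancel]; gcongr; exact (neg_le_abs _).trans (abs_sum_le_sum_abs _ _)
  rw [← sum_add_sum_compl s]
  linarith

/-- If `d_TV(p,q) ≥ ε` then the chi-squared statistic restricted to
`A = {i : q_i ≥ ε/(50n)}` is at least `ε²/5`. -/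
theorem chi_sq_restricted_large (n : ℕ) (p q : Fin n → ℝ) (ε : ℝ)
    (hε : 0 < ε ∧ ε ≤ 1)
    (hp0 : ∀ i, 0 ≤ p i) (hq0 : ∀ i, 0 ≤ q i)
    (hp1 : ∑ i, p i = 1) (hq1 : ∑ i, q i = 1)
    (hfar : ε ≤ (1 / 2) * ∑ i, |p i - q i|) :
    ε ^ 2 / 5 ≤
      ∑ i ∈ Finset.univ.filter (fun i => ε / (50 * n) ≤ q i), (p i - q i) ^ 2 / q i := by
  obtain ⟨hε0, -⟩ := hε
  set A := univ.filter fun i => ε / (50 * n) ≤ q i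
  have hn : (n : ℝ) ≠ 0 := Nat.cast_ne_zero.mpr (by rintro rfl; simp at hp1)
  have hqAc : ∑ i ∈ Aᶜ, q i ≤ ε / 50 := by
    have := sum_compl_filter_le_card_mul q (c := ε / (50 * n)) (by positivity)
    rwa [Fintype.card_fin, mul_div_left_comm, div_mul_cancel_right₀ hn, div_eq_mul_inv] at this
  have hA : 49 * ε / 50 ≤ ∑ i ∈ A, |p i - q i| := by
    have := sum_abs_sub_le_of_sum_eq hp0 hq0 (hp1.trans hq1.symm) A
    linarith
  have hqA : ∑ i ∈ A, q i ≤ 1 := by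
    rw [← hq1, ← sum_add_sum_compl A]
    linarith [sum_nonneg fun i (_ : i ∈ Aᶜ) => hq0 i]
  have hqpos : ∀ i ∈ A, 0 < q i := fun i hi =>
    lt_of_lt_of_le (by positivity) (mem_filter.mp hi).2
  calc ε ^ 2 / 5 ≤ (49 * ε / 50) ^ 2 := by nlinarith
    _ ≤ (∑ i ∈ A, |p i - q i|) ^ 2 := by gcongr
    _ ≤ ∑ i ∈ A, (p i - q i) ^ 2 / q i := sq_sum_abs_le_sum_sq_div _ hqpos hqA
end

section
/- Let X be Poisson-distributed with mean λ, and let λ' > 0. Then Var[((X - λ')² - X)/λ'] = (2λ² + 4λ(λ - λ')²)/λ'². -/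
/-!
The falling factorials are the natural basis for Poisson moments: shifting the exponential
series gives `E[X(X-1)⋯(X-j+1)] = λ^j`. Multiplied by `λ'`, the centred statistic is
`X(X-1) - 2λ'X + λ(2λ' - λ)`, so its square is a polynomial of degree four in `X`; expanding it
in the falling-factorial basis and taking expectations term by term gives the variance.
-/

open Finset

open Nat in
theorem Real.hasSum_pow_div_factorial_mul_descFactorial (x : ℝ) (j : ℕ) :
    HasSum (fun k : ℕ => x ^ k / k ! * k.descFactorial j) (x ^ j * Real.exp x) := by
  have below : ∑ i ∈ range j, x ^ i / i ! * (i.descFactorial j : ℝ) = 0 :=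
    sum_eq_zero fun i hi => by simp [descFactorial_eq_zero_iff_lt.mpr (mem_range.mp hi)]
  refine (hasSum_nat_add_iff' j).mp ?_
  rw [below, sub_zero, Real.exp_eq_exp_ℝ]
  refine ((NormedSpace.expSeries_div_hasSum_exp x).mul_left (x ^ j)).congr_fun fun k => ?_
  have hfac : (k ! : ℝ) * (k + j).descFactorial j = (k + j)! := by
    exact_mod_cast Nat.add_sub_cancel k j ▸ factorial_mul_descFactorial (Nat.le_add_left j k)
  have hk : (k ! : ℝ) ≠ 0 := by positivity
  rw [← hfac, pow_add]
  field_simp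

open Nat in
theorem hasSum_exp_neg_mul_pow_div_factorial_mul_descFactorial (x : ℝ) (j : ℕ) :
    HasSum (fun k : ℕ => Real.exp (-x) * x ^ k / k ! * k.descFactorial j) (x ^ j) := by
  have h := (Real.hasSum_pow_div_factorial_mul_descFactorial x j).mul_left (Real.exp (-x))
  rw [mul_left_comm, ← Real.exp_add, neg_add_cancel, Real.exp_zero, mul_one] at h
  exact h.congr_fun fun k => by ring

theorem Nat.cast_descFactorial_eq_prod_range {R : Type*} [CommRing R] (k j : ℕ) :
    (k.descFactorial j : R) = ∏ i ∈ range j, ((k : R) - i) := by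
  rw [← descPochhammer_eval_eq_descFactorial, descPochhammer_eval_eq_prod_range]

theorem poisson_chi_sq_term_variance_general (lam lam' : ℝ) (hlam' : 0 < lam') :
    ∑' k : ℕ, (Real.exp (-lam) * lam ^ k / (Nat.factorial k)) *
        (((((k : ℝ) - lam') ^ 2 - (k : ℝ)) / lam') - (lam - lam') ^ 2 / lam') ^ 2 =
      (2 * lam ^ 2 + 4 * lam * (lam - lam') ^ 2) / lam' ^ 2 := by
  have hlam'0 : lam' ≠ 0 := hlam'.ne'
  have moment := hasSum_exp_neg_mul_pow_div_factorial_mul_descFactorial lam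
  set c := lam * (2 * lam' - lam) with hc
  -- the coefficients of `(k(k-1) - 2λ'k + c)²` in the basis `k.descFactorial j`, `j = 4, …, 0`
  have H := ((((moment 4).add ((moment 3).mul_left (4 - 4 * lam'))).add
      ((moment 2).mul_left (2 - 8 * lam' + 4 * lam' ^ 2 + 2 * c))).add
      ((moment 1).mul_left (4 * lam' ^ 2 - 4 * lam' * c))).add ((moment 0).mul_left (c ^ 2))
  refine ((H.div_const (lam' ^ 2)).congr_fun fun k => ?_).tsum_eq.trans ?_
  · simp only [Nat.cast_descFactorial_eq_prod_range, prod_range_succ, prod_range_zero, hc]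
    field_simp
    ring
  · rw [hc]
    field_simp
    ring

/-- For `X ~ Poisson(λ)` and `λ' > 0`,
`Var[((X - λ')² - X)/λ'] = (2λ² + 4λ(λ - λ')²)/λ'²`.
The variance is written explicitly against the Poisson pmf `k ↦ exp(-λ)·λ^k/k!`,
as the expected squared deviation from the mean `(λ - λ')²/λ'`. -/
theorem poisson_chi_sq_term_variance (lam lam' : ℝ) (hlam : 0 < lam) (hlam' : 0 < lam') :
    ∑' k : ℕ, (Real.exp (-lam) * lam ^ k / (Nat.factorial k)) *
        (((((k : ℝ) - lam') ^ 2 - (k : ℝ)) / lam') - (lam - lam') ^ 2 / lam') ^ 2 =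
      (2 * lam ^ 2 + 4 * lam * (lam - lam') ^ 2) / lam' ^ 2 :=
  poisson_chi_sq_term_variance_general lam lam' hlam'
end

section
/- Let p be any probability distribution on [n] partitioned into intervals I₁,...,I_b, and let p̄ be the flattening of p over these intervals (p̄_i = p(I_j)/|I_j| for i ∈ I_j). Suppose q is the add-1 (Laplace) estimator built from m i.i.d. samples: for i ∈ I_j, q_i = (m_j + 1)/(|I_j|(m + b)), where m_j is the number of samples falling in I_j. Then E[χ²(p,q)] ≤ ((m+b)/(m+1))·χ²(p, p̄) + b/(m+1). -/
/-!
Block `j` contributes `|I_j| (m + b) (∑_{i ∈ I_j} p_i²) E[1 / (m_j + 1)]` to `E[∑ p_i² / q_i]`, and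
`E[1 / (m_j + 1)] = (1 - (1 - p(I_j))^(m+1)) / ((m + 1) p(I_j)) ≤ 1 / ((m + 1) p(I_j))`.
Since `χ²(p, p̄) + 1 = ∑_j |I_j| (∑_{i ∈ I_j} p_i²) / p(I_j)`, the expectation is at most
`((m + b)/(m + 1)) (χ²(p, p̄) + 1) - 1`, and `(m + b)/(m + 1) - 1 ≤ b/(m + 1)`.
-/

open Finset

theorem mul_sum_choose_mul_pow_div_add_one {K : Type*} [Field K] [CharZero K] (m : ℕ) (t : K) :
    ((m + 1) * t) * ∑ ℓ ∈ range (m + 1), (m.choose ℓ : K) * t ^ ℓ * (1 - t) ^ (m - ℓ) / (ℓ + 1) =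
      1 - (1 - t) ^ (m + 1) := by
  -- `(m + 1) C(m, ℓ) / (ℓ + 1) = C(m + 1, ℓ + 1)`, so the sum is the binomial expansion of
  -- `(t + (1 - t)) ^ (m + 1)` without its term of index `0`.
  have hshift : ∀ ℓ ∈ range (m + 1),
      ((m + 1) * t) * ((m.choose ℓ : K) * t ^ ℓ * (1 - t) ^ (m - ℓ) / (ℓ + 1)) =
        t ^ (ℓ + 1) * (1 - t) ^ (m + 1 - (ℓ + 1)) * ((m + 1).choose (ℓ + 1) : K) := by
    intro ℓ _
    have hchoose : ((m : K) + 1) * m.choose ℓ = (m + 1).choose (ℓ + 1) * ((ℓ : K) + 1) := by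
      exact_mod_cast Nat.add_one_mul_choose_eq m ℓ
    rw [Nat.add_sub_add_right]
    field_simp
    linear_combination (t ^ (ℓ + 1) * (1 - t) ^ (m - ℓ)) * hchoose
  have hbinom := add_pow t (1 - t) (m + 1)
  rw [add_sub_cancel, one_pow, sum_range_succ'] at hbinom
  rw [mul_sum, sum_congr rfl hshift]
  simp only [pow_zero, one_mul, Nat.sub_zero, Nat.choose_zero_right, Nat.cast_one, mul_one] at hbinom
  exact eq_sub_of_add_eq hbinom.symm

theorem sum_choose_mul_pow_mul_div_add_one_le {K : Type*} [Field K] [LinearOrder K]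
    [IsStrictOrderedRing K] {t : K} (ht0 : 0 < t) (ht1 : t ≤ 1) {c : K} (hc : 0 ≤ c) (m : ℕ) :
    ∑ ℓ ∈ range (m + 1), (m.choose ℓ : K) * t ^ ℓ * (1 - t) ^ (m - ℓ) * c / (ℓ + 1) ≤
      c / ((m + 1) * t) := by
  have hpos : 0 < ((m : K) + 1) * t := by positivity
  have hfactor : ∑ ℓ ∈ range (m + 1), (m.choose ℓ : K) * t ^ ℓ * (1 - t) ^ (m - ℓ) * c / (ℓ + 1) =
      c / ((m + 1) * t) * (1 - (1 - t) ^ (m + 1)) := by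
    rw [← mul_sum_choose_mul_pow_div_add_one, ← mul_assoc, div_mul_cancel₀ _ hpos.ne', mul_sum]
    exact sum_congr rfl fun ℓ _ => by ring
  rw [hfactor]
  exact mul_le_of_le_one_right (by positivity)
    (sub_le_self _ (pow_nonneg (sub_nonneg.2 ht1) _))

theorem sum_sq_sub_avg_div_avg {ι K : Type*} [Field K] [CharZero K] (s : Finset ι) (p : ι → K)
    (hs : s.Nonempty) (hP : ∑ i ∈ s, p i ≠ 0) :
    ∑ i ∈ s, (p i - (∑ i' ∈ s, p i') / #s) ^ 2 / ((∑ i' ∈ s, p i') / #s) =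
      #s * (∑ i ∈ s, p i ^ 2) / (∑ i ∈ s, p i) - ∑ i ∈ s, p i := by
  have hk : (#s : K) ≠ 0 := by exact_mod_cast hs.card_pos.ne'
  simp only [← sum_div, sub_sq, sum_add_distrib, sum_sub_distrib, ← sum_mul, ← mul_sum,
    sum_const, nsmul_eq_mul]
  field_simp
  ring

theorem Fin.sum_sum_Ico_castSucc_succ {M : Type*} [AddCommMonoid M] (g : ℕ → M) {b : ℕ}
    (e : Fin (b + 1) → ℕ) (he : Monotone e) :
    ∑ j : Fin b, ∑ i ∈ Ico (e j.castSucc) (e j.succ), g i = ∑ i ∈ Ico (e 0) (e (Fin.last b)), g i := by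
  induction b with
  | zero => simp
  | succ b ih =>
    have ih' := ih (e ∘ Fin.castSucc) (he.comp Fin.strictMono_castSucc.monotone)
    simp only [Function.comp_apply, Fin.castSucc_zero] at ih'
    rw [Fin.sum_univ_castSucc]
    simp only [Fin.succ_castSucc, ih', Fin.succ_last]
    exact sum_Ico_consecutive _ (he (Fin.zero_le _)) (he (Fin.castSucc_le_succ _))

theorem add_one_estimator_chi_sq_general (n b m : ℕ) (p : ℕ → ℝ)
    (e : Fin (b + 1) → ℕ) (he : StrictMono e) (he0 : e 0 = 0) (heb : e (Fin.last b) = n)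
    (hp1 : ∑ i ∈ Finset.range n, p i = 1)
    (hP : ∀ j : Fin b, 0 < ∑ i ∈ Finset.Ico (e j.castSucc) (e j.succ), p i) :
    (∑ j : Fin b, ∑ ℓ ∈ Finset.range (m + 1),
        (m.choose ℓ : ℝ) * (∑ i ∈ Finset.Ico (e j.castSucc) (e j.succ), p i) ^ ℓ *
          (1 - ∑ i ∈ Finset.Ico (e j.castSucc) (e j.succ), p i) ^ (m - ℓ) *
          (∑ i ∈ Finset.Ico (e j.castSucc) (e j.succ), p i ^ 2) *
          (((Finset.Ico (e j.castSucc) (e j.succ)).card : ℝ) * (m + b)) / (ℓ + 1)) - 1 ≤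
      ((m + b : ℝ) / (m + 1)) *
          (∑ j : Fin b, ∑ i ∈ Finset.Ico (e j.castSucc) (e j.succ),
            (p i - (∑ i' ∈ Finset.Ico (e j.castSucc) (e j.succ), p i') /
                ((Finset.Ico (e j.castSucc) (e j.succ)).card : ℝ)) ^ 2 /
              ((∑ i' ∈ Finset.Ico (e j.castSucc) (e j.succ), p i') /
                ((Finset.Ico (e j.castSucc) (e j.succ)).card : ℝ))) +
        (b : ℝ) / (m + 1) := by
  have hmass : ∑ j : Fin b, ∑ i ∈ Ico (e j.castSucc) (e j.succ), p i = 1 := by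
    rw [Fin.sum_sum_Ico_castSucc_succ p e he.monotone, he0, heb, ← range_eq_Ico, hp1]
  have hmass_le : ∀ j : Fin b, ∑ i ∈ Ico (e j.castSucc) (e j.succ), p i ≤ 1 := fun j =>
    hmass ▸ single_le_sum (fun j _ => (hP j).le) (mem_univ j)
  have hne : ∀ j : Fin b, (Ico (e j.castSucc) (e j.succ)).Nonempty := fun j =>
    nonempty_Ico.2 (he Fin.castSucc_lt_succ)
  have hcoef : ((m : ℝ) + b) / (m + 1) ≤ 1 + b / (m + 1) := by
    rw [div_le_iff₀ (by positivity), add_mul, div_mul_cancel₀ _ (by positivity)]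
    linarith
  simp only [mul_assoc _ (∑ i ∈ Ico _ _, p i ^ 2)]
  refine (sub_le_sub_right (sum_le_sum fun j _ => sum_choose_mul_pow_mul_div_add_one_le (hP j)
    (hmass_le j) (by positivity) m) 1).trans ?_
  rw [sum_congr rfl fun j _ => sum_sq_sub_avg_div_avg _ p (hne j) (hP j).ne', sum_sub_distrib,
    hmass, mul_sub, mul_one, mul_sum]
  simp only [show ∀ x k t : ℝ, x * (k * (m + b)) / ((m + 1) * t) = (m + b) / (m + 1) * (k * x / t)
    from fun _ _ _ => by rw [div_mul_div_comm]; ring]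
  linarith

/-- Expected chi-squared error of the add-1 (Laplace) estimator over a partition of `[n]`
into `b` intervals: `E[χ²(p,q)] ≤ ((m+b)/(m+1))·χ²(p,p̄) + b/(m+1)`, where `p̄` is the
flattening of `p`.  The partition is given by endpoints `e 0 = 0 < e 1 < ⋯ < e b = n`,
with interval `I j = [e j, e (j+1))`; the expectation over the binomial counts
`m_j ~ Bin(m, p(I_j))` is written out explicitly. -/
theorem add_one_estimator_chi_sq (n b m : ℕ) (hb : 0 < b) (p : ℕ → ℝ)
    (e : Fin (b + 1) → ℕ) (he : StrictMono e) (he0 : e 0 = 0) (heb : e (Fin.last b) = n)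
    (hp0 : ∀ i, 0 ≤ p i) (hp1 : ∑ i ∈ Finset.range n, p i = 1)
    (hP : ∀ j : Fin b, 0 < ∑ i ∈ Finset.Ico (e j.castSucc) (e j.succ), p i) :
    (∑ j : Fin b, ∑ ℓ ∈ Finset.range (m + 1),
        (m.choose ℓ : ℝ) * (∑ i ∈ Finset.Ico (e j.castSucc) (e j.succ), p i) ^ ℓ *
          (1 - ∑ i ∈ Finset.Ico (e j.castSucc) (e j.succ), p i) ^ (m - ℓ) *
          (∑ i ∈ Finset.Ico (e j.castSucc) (e j.succ), p i ^ 2) *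
          (((Finset.Ico (e j.castSucc) (e j.succ)).card : ℝ) * (m + b)) / (ℓ + 1)) - 1 ≤
      ((m + b : ℝ) / (m + 1)) *
          (∑ j : Fin b, ∑ i ∈ Finset.Ico (e j.castSucc) (e j.succ),
            (p i - (∑ i' ∈ Finset.Ico (e j.castSucc) (e j.succ), p i') /
                ((Finset.Ico (e j.castSucc) (e j.succ)).card : ℝ)) ^ 2 /
              ((∑ i' ∈ Finset.Ico (e j.castSucc) (e j.succ), p i') /
                ((Finset.Ico (e j.castSucc) (e j.succ)).card : ℝ))) +
        (b : ℝ) / (m + 1) :=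
  add_one_estimator_chi_sq_general n b m p e he he0 heb hp1 hP
end

section
/- Let p be a monotone hazard rate distribution on [n]. Let I = [a,b] ⊂ [n] be an interval and R = [b+1,n], with η = p(I)/p(R) (assuming p(R) > 0). Then p(b+1) ≥ p(a)/(1+η). -/
/-!
Compare the hazard rates at `a` and `b + 1`. Their tails are `1 - F a = (p(I) - p a) + p(R)`
and `1 - F (b+1) = p(R) - p(b+1)`, so after clearing denominators the terms `p a * p (b+1)`
cancel and what remains is `p a * p(R) ≤ p (b+1) * (p(I) + p(R))`, i.e. the claim.
When `p(R) = p (b+1)` the hazard rate at `b + 1` is undefined, but then the claim follows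
from `p a ≤ p(I)`.
-/

open Finset

section IntervalSums

variable {M : Type*} [AddCommGroup M] (f : ℕ → M)

theorem sum_Icc_one_sub_sum_Icc_one {i n : ℕ} (hin : i ≤ n) :
    ∑ k ∈ Icc 1 n, f k - ∑ k ∈ Icc 1 i, f k = ∑ k ∈ Ioc i n, f k := by
  have hIcc_one (m : ℕ) : Icc 1 m = Ioc 0 m := Icc_add_one_left_eq_Ioc 0 m
  rw [sub_eq_iff_eq_add', hIcc_one, hIcc_one, sum_Ioc_consecutive f (Nat.zero_le i) hin]

theorem sum_Ioc_eq_sum_Icc_sub_add_sum_Icc_succ {a b n : ℕ} (hab : a ≤ b) (hbn : b ≤ n) :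
    ∑ k ∈ Ioc a n, f k = ∑ k ∈ Icc a b, f k - f a + ∑ k ∈ Icc (b + 1) n, f k := by
  rw [← add_sum_Ioc_eq_sum_Icc hab, Icc_add_one_left_eq_Ioc, add_sub_cancel_left,
    sum_Ioc_consecutive f hab hbn]

theorem sum_Ioc_succ_eq_sum_Icc_succ_sub {b n : ℕ} (hbn : b + 1 ≤ n) :
    ∑ k ∈ Ioc (b + 1) n, f k = ∑ k ∈ Icc (b + 1) n, f k - f (b + 1) := by
  rw [← add_sum_Ioc_eq_sum_Icc hbn, add_sub_cancel_left]

end IntervalSums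

theorem mul_le_mul_add_of_div_le_div {K : Type*} [Field K] [LinearOrder K]
    [IsStrictOrderedRing K] {x y A R : K} (hy : 0 ≤ y) (hxA : x ≤ A) (hyR : y < R)
    (h : x / (A - x + R) ≤ y / (R - y)) : x * R ≤ y * (A + R) := by
  rw [div_le_div_iff₀ (by linarith) (by linarith)] at h
  linear_combination h

/-- Lemma 5.1 of Chan–Diakonikolas–Servedio–Sun: an MHR distribution is almost
non-decreasing.  If `I = [a,b] ⊂ [n]`, `R = [b+1,n]`, and `η = p(I)/p(R)`, then
`p(b+1) ≥ p(a)/(1+η)`. -/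
theorem mhr_almost_nondecreasing (n a b : ℕ) (p : ℕ → ℝ)
    (ha : 1 ≤ a) (hab : a ≤ b) (hbn : b + 1 ≤ n)
    (hp0 : ∀ i, 0 ≤ p i) (hp1 : ∑ i ∈ Finset.Icc 1 n, p i = 1)
    (hmhr : ∀ i j, 1 ≤ i → i < j → j ≤ n →
      0 < 1 - ∑ k ∈ Finset.Icc 1 i, p k → 0 < 1 - ∑ k ∈ Finset.Icc 1 j, p k →
      p i / (1 - ∑ k ∈ Finset.Icc 1 i, p k) ≤ p j / (1 - ∑ k ∈ Finset.Icc 1 j, p k))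
    (hR : 0 < ∑ i ∈ Finset.Icc (b + 1) n, p i) :
    p a / (1 + (∑ i ∈ Finset.Icc a b, p i) / (∑ i ∈ Finset.Icc (b + 1) n, p i)) ≤
      p (b + 1) := by
  set A := ∑ i ∈ Icc a b, p i
  set R := ∑ i ∈ Icc (b + 1) n, p i
  have hpaA : p a ≤ A := single_le_sum (fun i _ ↦ hp0 i) (mem_Icc.mpr ⟨le_rfl, hab⟩)
  have hqR : p (b + 1) ≤ R := single_le_sum (fun i _ ↦ hp0 i) (mem_Icc.mpr ⟨le_rfl, hbn⟩)
  have htail_a : 1 - ∑ k ∈ Icc 1 a, p k = A - p a + R := by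
    rw [← hp1, sum_Icc_one_sub_sum_Icc_one p (by omega),
      sum_Ioc_eq_sum_Icc_sub_add_sum_Icc_succ p hab (by omega)]
  have htail_b : 1 - ∑ k ∈ Icc 1 (b + 1), p k = R - p (b + 1) := by
    rw [← hp1, sum_Icc_one_sub_sum_Icc_one p hbn, sum_Ioc_succ_eq_sum_Icc_succ_sub p hbn]
  have key : p a * R ≤ p (b + 1) * (A + R) := by
    rcases hqR.lt_or_eq with hlt | heq
    · have hazard := hmhr a (b + 1) ha (by omega) hbn
        (by rw [htail_a]; linarith [hp0 (b + 1)]) (by rw [htail_b]; linarith)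
      rw [htail_a, htail_b] at hazard
      exact mul_le_mul_add_of_div_le_div (hp0 (b + 1)) hpaA hlt hazard
    · rw [heq]
      nlinarith [hp0 a]
  calc p a / (1 + A / R) = p a * R / (A + R) := by field_simp; ring
    _ ≤ p (b + 1) := by rw [div_le_iff₀ (by linarith [hp0 a])]; linarith
end

section
/- Let n be even and q a Paninski-type perturbed distribution on [n] (q_{2ℓ+1} = (1+z_ℓcε)/n, q_{2ℓ+2} = (1-z_ℓcε)/n for z ∈ {-1,1}^{n/2}). Then every unimodal probability distribution p on [n] satisfies d_TV(p,q) ≥ cε/4 - cε/(2n) - 1/2·(2/n). -/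
/-!
Group the points into the pairs `{2ℓ, 2ℓ+1}`, on which `q` equals `1/n ± δ` with `δ = cε/n`.
On a pair where `p` is monotone in the direction opposite to `q`, the pair contributes at least
`2δ` to the `ℓ¹` distance; on a pair where `p` moves in the same direction as `q`, it contributes
at least `δ` unless `p` crosses the level `1/n` strictly inside the pair. A monotone stretch of
`p` crosses a given level inside at most one pair, so a unimodal `p` has at most two pairs
contributing less than `δ`, whence `‖p - q‖₁ ≥ (n/2 - 2) δ`.
-/

open Finset OrderDual

theorem Finset.sum_range_two_mul {M : Type*} [AddCommMonoid M] (f : ℕ → M) (N : ℕ) :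
    ∑ i ∈ range (2 * N), f i = ∑ ℓ ∈ range N, (f (2 * ℓ) + f (2 * ℓ + 1)) := by
  induction N with
  | zero => simp
  | succ N ih => rw [Nat.mul_succ, sum_range_succ, sum_range_succ, sum_range_succ, ih, add_assoc]

theorem Finset.card_sub_mul_le_sum {ι : Type*} (s : Finset ι) {f : ι → ℝ} {δ : ℝ} {k : ℕ}
    (hf : ∀ i ∈ s, 0 ≤ f i) (hδ : 0 ≤ δ) (hk : #{i ∈ s | f i < δ} ≤ k) :
    ((#s : ℝ) - k) * δ ≤ ∑ i ∈ s, f i := by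
  have hcard : (#s : ℝ) - k ≤ #{i ∈ s | ¬ f i < δ} := by
    have := card_filter_add_card_filter_not (fun i => f i < δ) (s := s)
    rw [sub_le_iff_le_add]
    exact_mod_cast this.symm.le.trans (by omega)
  calc ((#s : ℝ) - k) * δ ≤ #{i ∈ s | ¬ f i < δ} • δ := by
        rw [nsmul_eq_mul]; gcongr
    _ ≤ ∑ i ∈ s with ¬ f i < δ, f i :=
        card_nsmul_le_sum _ _ _ fun i hi => not_lt.1 (mem_filter.1 hi).2
    _ ≤ ∑ i ∈ s, f i := sum_le_sum_of_subset_of_nonneg (filter_subset _ _) fun i hi _ => hf i hi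

theorem lt_and_lt_of_abs_sub_add_abs_sub_lt {a b u δ z : ℝ}
    (hz : z = 1 ∨ z = -1) (hab : a ≤ b) (h : |a - (u + z * δ)| + |b - (u - z * δ)| < δ) :
    a < u ∧ u < b := by
  have ha := neg_abs_le (a - (u + z * δ))
  have ha' := le_abs_self (a - (u + z * δ))
  have hb := neg_abs_le (b - (u - z * δ))
  have hb' := le_abs_self (b - (u - z * δ))
  rcases hz with rfl | rfl <;> constructor <;> linarith

theorem lt_and_lt_of_abs_sub_add_abs_sub_lt' {a b u δ z : ℝ}
    (hz : z = 1 ∨ z = -1) (hba : b ≤ a) (h : |a - (u + z * δ)| + |b - (u - z * δ)| < δ) :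
    b < u ∧ u < a := by
  have hz' : -z = 1 ∨ -z = -1 := by rcases hz with rfl | rfl <;> norm_num
  refine lt_and_lt_of_abs_sub_add_abs_sub_lt (δ := δ) hz' hba ?_
  convert (add_comm _ _).trans_lt h using 4 <;> ring

theorem card_filter_lt_and_lt_le_one_of_monotoneOn {β : Type*} [LinearOrder β] {p : ℕ → β}
    {s : Set ℕ} [DecidablePred (· ∈ s)] (hp : MonotoneOn p s) (t : Finset ℕ) (u : β) :
    #{ℓ ∈ t | 2 * ℓ ∈ s ∧ 2 * ℓ + 1 ∈ s ∧ p (2 * ℓ) < u ∧ u < p (2 * ℓ + 1)} ≤ 1 := by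
  refine card_le_one.2 fun a ha b hb => ?_
  simp only [mem_filter] at ha hb
  by_contra hne
  wlog hab : a < b generalizing a b
  · exact this b a hb ha (Ne.symm hne) (lt_of_le_of_ne (not_lt.1 hab) (Ne.symm hne))
  have := hp ha.2.2.1 hb.2.1 (by omega)
  exact lt_asymm (ha.2.2.2.2.trans_le this) hb.2.2.2.1

theorem card_filter_abs_sub_add_abs_sub_lt_le_two {p : ℕ → ℝ} {m n : ℕ}
    (hinc : MonotoneOn p (Set.Iic m)) (hdec : AntitoneOn p (Set.Ico m n)) (u δ : ℝ)
    {z : ℕ → ℝ} (hz : ∀ ℓ < n / 2, z ℓ = 1 ∨ z ℓ = -1) :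
    #{ℓ ∈ range (n / 2) |
      |p (2 * ℓ) - (u + z ℓ * δ)| + |p (2 * ℓ + 1) - (u - z ℓ * δ)| < δ} ≤ 2 := by
  set I := Set.Iic m
  set D := Set.Ico m n
  have hsub : {ℓ ∈ range (n / 2) |
        |p (2 * ℓ) - (u + z ℓ * δ)| + |p (2 * ℓ + 1) - (u - z ℓ * δ)| < δ} ⊆
      {ℓ ∈ range (n / 2) | 2 * ℓ ∈ I ∧ 2 * ℓ + 1 ∈ I ∧ p (2 * ℓ) < u ∧ u < p (2 * ℓ + 1)} ∪
      {ℓ ∈ range (n / 2) | 2 * ℓ ∈ D ∧ 2 * ℓ + 1 ∈ D ∧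
        (toDual ∘ p) (2 * ℓ) < toDual u ∧ toDual u < (toDual ∘ p) (2 * ℓ + 1)} := by
    intro ℓ hℓ
    simp only [mem_filter, mem_range, mem_union] at hℓ ⊢
    by_cases hm : 2 * ℓ + 1 ≤ m
    · have hI : 2 * ℓ ∈ I ∧ 2 * ℓ + 1 ∈ I := ⟨by simp [I]; omega, hm⟩
      exact .inl ⟨hℓ.1, hI.1, hI.2, lt_and_lt_of_abs_sub_add_abs_sub_lt (hz ℓ hℓ.1)
        (hinc hI.1 hI.2 (by omega)) hℓ.2⟩
    · have hD : 2 * ℓ ∈ D ∧ 2 * ℓ + 1 ∈ D := ⟨⟨by omega, by omega⟩, ⟨by omega, by omega⟩⟩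
      exact .inr ⟨hℓ.1, hD.1, hD.2, lt_and_lt_of_abs_sub_add_abs_sub_lt' (hz ℓ hℓ.1)
        (hdec hD.1 hD.2 (by omega)) hℓ.2 |>.symm⟩
  calc _ ≤ _ := card_le_card hsub
    _ ≤ _ := card_union_le _ _
    _ ≤ 1 + 1 := add_le_add
        (card_filter_lt_and_lt_le_one_of_monotoneOn hinc _ _)
        (card_filter_lt_and_lt_le_one_of_monotoneOn hdec.dual_right _ _)

theorem unimodal_far_from_paninski_general (n : ℕ) (hn : 0 < n) (hne : Even n) (c ε : ℝ)
    (hc : 0 < c) (hε : 0 < ε) (hcε : c * ε ≤ 1)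
    (z : ℕ → ℝ) (hz : ∀ ℓ < n / 2, z ℓ = 1 ∨ z ℓ = -1)
    (q : ℕ → ℝ)
    (hq : ∀ ℓ < n / 2, q (2 * ℓ) = (1 + z ℓ * c * ε) / n ∧
      q (2 * ℓ + 1) = (1 - z ℓ * c * ε) / n)
    (p : ℕ → ℝ)
    (huni : ∃ m : ℕ, (∀ i, i + 1 ≤ m → p i ≤ p (i + 1)) ∧
      (∀ i, m ≤ i → i + 1 < n → p (i + 1) ≤ p i)) :
    c * ε / 4 - c * ε / (2 * n) - (1 / 2) * (2 / n) ≤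
      (1 / 2) * ∑ i ∈ Finset.range n, |p i - q i| := by
  obtain ⟨m, hup, hdown⟩ := huni
  have hinc : MonotoneOn p (Set.Iic m) :=
    monotoneOn_of_le_succ Set.ordConnected_Iic fun i _ _ hi => by
      simpa [Order.succ_eq_add_one] using hup i hi
  have hdec : AntitoneOn p (Set.Ico m n) :=
    antitoneOn_of_succ_le Set.ordConnected_Ico fun i _ hi hi' => by
      simpa [Order.succ_eq_add_one] using hdown i hi.1 hi'.2
  have hδ : 0 ≤ c * ε / n := by positivity
  have hpairs : ∑ i ∈ range n, |p i - q i| = ∑ ℓ ∈ range (n / 2),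
      (|p (2 * ℓ) - (1 / n + z ℓ * (c * ε / n))| +
        |p (2 * ℓ + 1) - (1 / n - z ℓ * (c * ε / n))|) := by
    rw [← Nat.mul_div_cancel' hne.two_dvd, sum_range_two_mul, Nat.mul_div_cancel' hne.two_dvd]
    refine sum_congr rfl fun ℓ hℓ => ?_
    obtain ⟨hq₀, hq₁⟩ := hq ℓ (mem_range.1 hℓ)
    rw [hq₀, hq₁]
    congr 3 <;> ring
  have hsum := card_sub_mul_le_sum (range (n / 2)) (fun ℓ _ => by positivity) hδ
    (card_filter_abs_sub_add_abs_sub_lt_le_two hinc hdec (1 / n) (c * ε / n) hz)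
  rw [← hpairs, card_range, Nat.cast_div hne.two_dvd two_ne_zero, Nat.cast_ofNat] at hsum
  have hn' : (0 : ℝ) < n := by exact_mod_cast hn
  have hbound : c * ε / 4 - c * ε / (2 * n) - (1 / 2) * (2 / n) ≤
      (1 / 2) * (((n : ℝ) / 2 - 2) * (c * ε / n)) := by
    field_simp
    nlinarith
  linarith

/-- Every unimodal distribution `p` on `[n]` is at total variation distance at least
`cε/4 - cε/(2n) - (1/2)·(2/n)` from any Paninski perturbed distribution `q`. -/
theorem unimodal_far_from_paninski (n : ℕ) (hn : 0 < n) (hne : Even n) (c ε : ℝ)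
    (hc : 0 < c) (hε : 0 < ε) (hcε : c * ε ≤ 1)
    (z : ℕ → ℝ) (hz : ∀ ℓ < n / 2, z ℓ = 1 ∨ z ℓ = -1)
    (q : ℕ → ℝ)
    (hq : ∀ ℓ < n / 2, q (2 * ℓ) = (1 + z ℓ * c * ε) / n ∧
      q (2 * ℓ + 1) = (1 - z ℓ * c * ε) / n)
    (p : ℕ → ℝ) (hp0 : ∀ i, 0 ≤ p i) (hp1 : ∑ i ∈ Finset.range n, p i = 1)
    (huni : ∃ m : ℕ, (∀ i, i + 1 ≤ m → p i ≤ p (i + 1)) ∧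
      (∀ i, m ≤ i → i + 1 < n → p (i + 1) ≤ p i)) :
    c * ε / 4 - c * ε / (2 * n) - (1 / 2) * (2 / n) ≤
      (1 / 2) * ∑ i ∈ Finset.range n, |p i - q i| :=
  unimodal_far_from_paninski_general n hn hne c ε hc hε hcε z hz q hq p huni
end
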